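/- Let 1 ≤ p < ∞ and let σ : 𝔛 × Ω × [0,τ] → ℂ be a measurable symbol such that for all x, y ∈ 𝔛 the integral K(x,y) = ∫_Ω ∫₀^τ q^{(1/2−is)·h_ω(x)}·q^{(1/2+is)·h_ω(y)}·σ(x,ω,s) dν(ω) dμ(s) converges absolutely. Suppose there exist sequences {g_k} in ℓ^{p′}(𝔛) and {f_k} in ℓ^{p}(𝔛) with Σ_k ‖g_k‖_{ℓ^{p′}(𝔛)}·‖f_k‖_{ℓ^{p}(𝔛)} < ∞ and K(x,y) = Σ_k f_k(x)·g_k(y) for all x, y ∈ 𝔛 (so that T_σ : ℓ^p(𝔛) → ℓ^p(𝔛) is nuclear). Then the function x ↦ ∫_Ω ∫₀^τ q^{h_ω(x)}·σ(x,ω,s) dν(ω) dμ(s) belongs to ℓ¹(𝔛), and the nuclear trace of T_σ satisfies Σ_k Σ_{x∈𝔛} f_k(x)·g_k(x) = Σ_{x∈𝔛} ∫_Ω ∫₀^τ q^{h_ω(x)}·σ(x,ω,s) dν(ω) dμ(s). -/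

import Mathlib

/-! On the diagonal the two Fourier–Helgason kernels multiply to `q^{h_ω(x)}`, so
`∫∫ q^{h_ω(x)} σ(x,ω,s) = K(x,x) = ∑_k f_k(x) g_k(x)`. By Hölder,
`∑_x |f_k(x) g_k(x)| ≤ ‖f_k‖_p ‖g_k‖_{p'}`, so the double series over `(k, x)` converges
absolutely; this gives both the `ℓ¹` bound and the interchange of the two sums. -/

noncomputable section
open MeasureTheory Complex Set
open scoped ENNReal NNReal

/-- `q ^ (z ⬝ m)` : the complex power `q^{z·h_ω(x)}` appearing in the Fourier–Helgason
kernels of the homogeneous tree of degree `q+1`. -/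
def pw (q : ℕ) (z : ℂ) (m : ℤ) : ℂ := (q : ℂ) ^ (z * (m : ℂ))

/-- The measure `ν ⊗ μ|_{[0,τ]}` on `Ω × [0,τ]`. -/
def PM {Ω : Type*} [MeasurableSpace Ω] (ν : Measure Ω) (μ : Measure ℝ) (τ : ℝ) :
    Measure (Ω × ℝ) := ν.prod (μ.restrict (Set.Icc 0 τ))

namespace lp

variable {α ι 𝕜 : Type*} [RCLike 𝕜] {p q : ℝ≥0∞} [Fact (1 ≤ p)] [Fact (1 ≤ q)]
  [p.HolderConjugate q]

/-- Unlike `lp.tsum_mul_le_mul_norm`, this covers `p = 1, q = ∞`. -/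
theorem summable_norm_mul_and_tsum_le (f : lp (fun _ : α => 𝕜) p) (g : lp (fun _ : α => 𝕜) q) :
    (Summable fun i => ‖f i * g i‖) ∧ ∑' i, ‖f i * g i‖ ≤ ‖f‖ * ‖g‖ := by
  let mulL : lp (fun _ : α => 𝕜) p →L[𝕜] lp (fun _ : α => 𝕜) q →L[𝕜] lp (fun _ : α => 𝕜) 1 :=
    holderL 1 (fun _ => ContinuousLinearMap.mul 𝕜 𝕜) (K := 1)
      fun _ => ContinuousLinearMap.opNorm_mul_le 𝕜 𝕜
  have hsum : HasSum (fun i => ‖f i * g i‖) ‖mulL f g‖ := by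
    have h := hasSum_norm (p := 1) (by simp) (mulL f g)
    simp only [ENNReal.toReal_one, Real.rpow_one] at h
    exact h
  refine ⟨hsum.summable, hsum.tsum_eq ▸ ?_⟩
  calc ‖mulL f g‖ ≤ ‖mulL‖ * ‖f‖ * ‖g‖ := mulL.le_opNorm₂ f g
    _ ≤ 1 * ‖f‖ * ‖g‖ := by gcongr; exact norm_holderL_le 1 _ _
    _ = ‖f‖ * ‖g‖ := by rw [one_mul]

variable {f : ι → lp (fun _ : α => 𝕜) p} {g : ι → lp (fun _ : α => 𝕜) q}

theorem summable_norm_mul_uncurry (hfg : Summable fun k => ‖f k‖ * ‖g k‖) :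
    Summable fun kx : ι × α => ‖f kx.1 kx.2 * g kx.1 kx.2‖ := by
  refine (summable_prod_of_nonneg fun _ => norm_nonneg _).mpr
    ⟨fun k => (summable_norm_mul_and_tsum_le (f k) (g k)).1, ?_⟩
  exact hfg.of_nonneg_of_le (fun _ => tsum_nonneg fun _ => norm_nonneg _)
    fun k => (summable_norm_mul_and_tsum_le (f k) (g k)).2

theorem summable_norm_tsum_mul (hfg : Summable fun k => ‖f k‖ * ‖g k‖) :
    Summable fun x => ‖∑' k, f k x * g k x‖ := by
  have hswap := (summable_norm_mul_uncurry hfg).prod_symm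
  exact hswap.prod.of_nonneg_of_le (fun _ => norm_nonneg _)
    fun x => norm_tsum_le_tsum_norm (hswap.prod_factor x)

theorem tsum_tsum_mul_comm (hfg : Summable fun k => ‖f k‖ * ‖g k‖) :
    ∑' k, ∑' x, f k x * g k x = ∑' x, ∑' k, f k x * g k x :=
  ((summable_norm_mul_uncurry hfg).of_norm
    (f := Function.uncurry fun k x => f k x * g k x)).tsum_comm.symm

end lp

theorem pw_mul_pw {q : ℕ} (hq : q ≠ 0) (a b : ℂ) (m : ℤ) :
    pw q a m * pw q b m = pw q (a + b) m := by
  rw [pw, pw, pw, ← Complex.cpow_add _ _ (Nat.cast_ne_zero.mpr hq), add_mul]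

theorem pseudodiff_nuclear_trace_general
    (q : ℕ) (hq : 2 ≤ q)
    {𝔛 : Type*}
    {Ω : Type*} [MeasurableSpace Ω]
    (ν : Measure Ω)
    (μ : Measure ℝ)
    (τ : ℝ)
    (h : Ω → 𝔛 → ℤ)
    (σ : 𝔛 → Ω → ℝ → ℂ)
    (p p' : ℝ≥0∞) [Fact (1 ≤ p)] [Fact (1 ≤ p')]
    (hp' : 1 / p + 1 / p' = 1)
    (K : 𝔛 → 𝔛 → ℂ)
    (hKdef : ∀ x y : 𝔛, K x y =
      ∫ pr, pw q (1 / 2 - I * pr.2) (h pr.1 x) * pw q (1 / 2 + I * pr.2) (h pr.1 y) *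
        σ x pr.1 pr.2 ∂PM ν μ τ)
    -- the kernel decomposition making `T_σ` nuclear
    (g : ℕ → lp (fun _ : 𝔛 => ℂ) p') (f : ℕ → lp (fun _ : 𝔛 => ℂ) p)
    (hsum : Summable fun k : ℕ => ‖g k‖ * ‖f k‖)
    (hK : ∀ x y : 𝔛, K x y = ∑' k : ℕ, f k x * g k y) :
    Summable (fun x : 𝔛 =>
      ‖∫ pr, pw q 1 (h pr.1 x) * σ x pr.1 pr.2 ∂PM ν μ τ‖) ∧
    (∑' k : ℕ, ∑' x : 𝔛, f k x * g k x) =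
      ∑' x : 𝔛, ∫ pr, pw q 1 (h pr.1 x) * σ x pr.1 pr.2 ∂PM ν μ τ := by
  have : p.HolderConjugate p' := ENNReal.holderConjugate_iff.mpr (by simpa only [one_div] using hp')
  have hdiag (x : 𝔛) : ∫ pr, pw q 1 (h pr.1 x) * σ x pr.1 pr.2 ∂PM ν μ τ = K x x := by
    simp only [hKdef, pw_mul_pw (by omega : q ≠ 0), sub_add_add_cancel, add_halves]
  simp only [hdiag, hK]
  have hfg : Summable fun k => ‖f k‖ * ‖g k‖ := by simpa only [mul_comm] using hsum
  exact ⟨lp.summable_norm_tsum_mul hfg, lp.tsum_tsum_mul_comm hfg⟩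

/-- if the kernel of the nuclear operator `T_σ : ℓ^p(𝔛) → ℓ^p(𝔛)` decomposes
as `K(x,y) = Σ_k f_k(x) g_k(y)` with `Σ_k ‖g_k‖_{p′} ‖f_k‖_p < ∞`, then
`x ↦ ∫∫ q^{h_ω(x)} σ(x,ω,s) dν dμ ∈ ℓ¹(𝔛)` and the nuclear trace satisfies
`Σ_k Σ_x f_k(x) g_k(x) = Σ_x ∫∫ q^{h_ω(x)} σ(x,ω,s) dν dμ`. -/
theorem pseudodiff_nuclear_trace
    (q : ℕ) (hq : 2 ≤ q)
    {𝔛 : Type*} [Countable 𝔛]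
    {Ω : Type*} [MeasurableSpace Ω]
    (ν : Measure Ω) [IsProbabilityMeasure ν]
    (μ : Measure ℝ) [IsFiniteMeasure μ]
    (τ : ℝ) (hτ : τ = Real.pi / Real.log q)
    (h : Ω → 𝔛 → ℤ) (hh : ∀ x, Measurable fun ω => h ω x)
    (σ : 𝔛 → Ω → ℝ → ℂ) (hσ : ∀ x, Measurable fun pr : Ω × ℝ => σ x pr.1 pr.2)
    (p p' : ℝ≥0∞) [Fact (1 ≤ p)] [Fact (1 ≤ p')]
    (hp : p ≠ ∞) (hp' : 1 / p + 1 / p' = 1)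
    -- absolute convergence of the integral defining the kernel `K`
    (habs : ∀ x y : 𝔛, Integrable
      (fun pr : Ω × ℝ =>
        pw q (1 / 2 - I * pr.2) (h pr.1 x) * pw q (1 / 2 + I * pr.2) (h pr.1 y) *
          σ x pr.1 pr.2) (PM ν μ τ))
    (K : 𝔛 → 𝔛 → ℂ)
    (hKdef : ∀ x y : 𝔛, K x y =
      ∫ pr, pw q (1 / 2 - I * pr.2) (h pr.1 x) * pw q (1 / 2 + I * pr.2) (h pr.1 y) *
        σ x pr.1 pr.2 ∂PM ν μ τ)
    -- absolute convergence of `∫∫ q^{h_ω(x)} σ(x,ω,s) dν dμ`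
    (habs' : ∀ x : 𝔛, Integrable
      (fun pr : Ω × ℝ => pw q 1 (h pr.1 x) * σ x pr.1 pr.2) (PM ν μ τ))
    -- the kernel decomposition making `T_σ` nuclear
    (g : ℕ → lp (fun _ : 𝔛 => ℂ) p') (f : ℕ → lp (fun _ : 𝔛 => ℂ) p)
    (hsum : Summable fun k : ℕ => ‖g k‖ * ‖f k‖)
    (hK : ∀ x y : 𝔛, K x y = ∑' k : ℕ, f k x * g k y) :
    Summable (fun x : 𝔛 =>
      ‖∫ pr, pw q 1 (h pr.1 x) * σ x pr.1 pr.2 ∂PM ν μ τ‖) ∧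
    (∑' k : ℕ, ∑' x : 𝔛, f k x * g k x) =
      ∑' x : 𝔛, ∫ pr, pw q 1 (h pr.1 x) * σ x pr.1 pr.2 ∂PM ν μ τ :=
  pseudodiff_nuclear_trace_general q hq ν μ τ h σ p p' hp' K hKdef g f hsum hK
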